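/- Let N be a positive integer, α, β divisors of N, A = N/α, B = N/β, and let a ∈ ℂ^{N×N}, g₁, g₂ ∈ ℂ^N. The spreading function of the Gabor multiplier G_a^{g₁,g₂} with lattice αℤ_N × βℤ_N satisfies η(G)(u,v) = (N/(αβ)) · [Σ_{l=0}^{α−1} Σ_{k=0}^{β−1} F_s a(u + Bk, v − Al)] · V_{g₁}g₂(u,v) for all u,v ∈ ℤ_N. -/

import Mathlib

/-!
Write `e(x) = exp(2πi x / N)`. Substituting `t ↦ t + αk` in the sum over `t` turns each term of
the Gabor kernel into a modulated short-time Fourier transform, so that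
`η(G)(u,v) = (Σ_{k,l} a(αk, βl) e(βl·u − αk·v)) · V_{g₁}g₂(u,v)`.
On the other side, expanding `F_s a(u + Bk, v − Al)` and summing over the shifts first produces the
geometric sums `Σ_{k<β} e(Bk·l') = β·[β ∣ l']` and `Σ_{l<α} e(Al·k') = α·[α ∣ k']`: a discrete
Poisson summation formula which collapses the periodized `F_s a` to the same lattice sum.
-/

open ComplexConjugate Finset

section AddChar

variable {R : Type*} [CommRing R] [Fintype R]

/-- The short-time Fourier transform `V_{g₁} g₂` with respect to the character `ψ`. -/
noncomputable def stft (ψ : AddChar R ℂ) (g₁ g₂ : R → ℂ) (u v : R) : ℂ :=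
  ∑ t, g₂ t * conj (g₁ (t - u)) * ψ (-(t * v))

theorem stft_comp_sub_right (ψ : AddChar R ℂ) (g₁ g₂ : R → ℂ) (w u v : R) :
    stft ψ (fun t => g₁ (t - w)) (fun t => g₂ (t - w)) u v = ψ (-(w * v)) * stft ψ g₁ g₂ u v := by
  rw [stft, stft, mul_sum, ← Equiv.sum_comp (Equiv.addRight w)]
  refine sum_congr rfl fun t _ => ?_
  rw [Equiv.coe_addRight, add_sub_cancel_right, add_sub_right_comm, add_sub_cancel_right, add_mul,
    neg_add, AddChar.map_add_eq_mul]
  ring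

theorem sum_gaborKernel_mul_addChar_eq_mul_stft {ι κ : Type*} (ψ : AddChar R ℂ) (s : Finset ι)
    (s' : Finset κ) (c : ι → κ → ℂ) (x : ι → R) (y : κ → R) (g₁ g₂ : R → ℂ) (u v : R) :
    ∑ t, (∑ k ∈ s, ∑ l ∈ s', c k l * conj (g₁ (t - u - x k)) * g₂ (t - x k) * ψ (y l * u)) *
        ψ (-(t * v)) =
      (∑ k ∈ s, ∑ l ∈ s', c k l * ψ (y l * u - x k * v)) * stft ψ g₁ g₂ u v := by
  simp_rw [sum_mul]
  rw [sum_comm]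
  refine sum_congr rfl fun k _ => ?_
  rw [sum_comm]
  refine sum_congr rfl fun l _ => ?_
  rw [sub_eq_add_neg (y l * u), ← neg_mul, AddChar.map_add_eq_mul, neg_mul, mul_assoc, mul_assoc,
    ← stft_comp_sub_right, stft]
  simp only [mul_sum]
  exact sum_congr rfl fun t _ => by ring

end AddChar

namespace ZMod

variable {N : ℕ} [NeZero N]

theorem natCast_div_mul_eq_zero_iff {b : ℕ} (hb : b ∣ N) (x : ZMod N) :
    ((N / b : ℕ) : ZMod N) * x = 0 ↔ b ∣ x.val := by
  have hN : N / b * b = N := Nat.div_mul_cancel hb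
  have hpos : 0 < N / b := Nat.pos_of_ne_zero fun h => NeZero.ne N (by rw [← hN, h, zero_mul])
  rw [← natCast_zmod_val x, ← Nat.cast_mul, natCast_eq_zero_iff, natCast_zmod_val]
  nth_rw 1 [← hN]
  exact Nat.mul_dvd_mul_iff_left hpos

theorem sum_filter_dvd_val {M : Type*} [AddCommMonoid M] {b : ℕ} (hb : b ∣ N)
    (f : ZMod N → M) : ∑ x with b ∣ x.val, f x = ∑ j ∈ range (N / b), f (b * j) := by
  have hb₀ : 0 < b := Nat.pos_of_dvd_of_pos hb (NeZero.pos N)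
  have hlt : ∀ j < N / b, b * j < N := fun j => (Nat.lt_div_iff_mul_lt' hb j).1
  refine sum_nbij' (fun x => x.val / b) (fun j => ((b * j : ℕ) : ZMod N)) ?_ ?_ ?_ ?_ ?_
  · intro x _
    exact mem_range.2 (Nat.div_lt_div_of_lt_of_dvd hb x.val_lt)
  · intro j hj
    rw [mem_filter, val_cast_of_lt (hlt j (mem_range.1 hj))]
    exact ⟨mem_univ _, dvd_mul_right b j⟩
  · intro x hx
    simp only [Nat.mul_div_cancel' (mem_filter.1 hx).2, natCast_zmod_val]
  · intro j hj
    simp only [val_cast_of_lt (hlt j (mem_range.1 hj)), Nat.mul_div_cancel_left j hb₀]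
  · intro x hx
    rw [← Nat.cast_mul, Nat.mul_div_cancel' (mem_filter.1 hx).2, natCast_zmod_val]

theorem stdAddChar_eq_one_iff (x : ZMod N) : stdAddChar x = 1 ↔ x = 0 := by
  rw [← AddChar.map_zero_eq_one (stdAddChar (N := N)), injective_stdAddChar.eq_iff]

theorem geom_sum_stdAddChar {b : ℕ} (hb : b ∣ N) (x : ZMod N) :
    ∑ k ∈ range b, stdAddChar (((N / b : ℕ) : ZMod N) * x) ^ k =
      if b ∣ x.val then (b : ℂ) else 0 := by
  set z := stdAddChar (((N / b : ℕ) : ZMod N) * x)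
  have hz : z ^ b = 1 := by
    rw [← AddChar.map_nsmul_eq_pow, nsmul_eq_mul, ← mul_assoc, ← Nat.cast_mul,
      Nat.mul_div_cancel' hb, natCast_self, zero_mul, AddChar.map_zero_eq_one]
  have hz₁ : z = 1 ↔ b ∣ x.val := (stdAddChar_eq_one_iff _).trans (natCast_div_mul_eq_zero_iff hb x)
  by_cases h : z = 1
  · simp [h, if_pos (hz₁.1 h)]
  · rw [if_neg (mt hz₁.2 h), geom_sum_eq h, hz, sub_self, zero_div]

theorem sum_geom_sum_stdAddChar_mul {b : ℕ} (hb : b ∣ N) (f : ZMod N → ℂ) :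
    ∑ x, (∑ k ∈ range b, stdAddChar (((N / b : ℕ) : ZMod N) * x) ^ k) * f x =
      b * ∑ j ∈ range (N / b), f (b * j) := by
  simp only [geom_sum_stdAddChar hb, ite_mul, zero_mul]
  rw [← sum_filter, ← sum_filter_dvd_val hb, mul_sum]

/-- The discrete symplectic Fourier transform `F_s a`. -/
noncomputable def symplecticFourier (a : ZMod N → ZMod N → ℂ) (u v : ZMod N) : ℂ :=
  1 / N * ∑ k, ∑ l, a k l * stdAddChar (l * u - k * v)

theorem poisson_summation_symplecticFourier {α β : ℕ} (hα : α ∣ N) (hβ : β ∣ N)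
    (a : ZMod N → ZMod N → ℂ) (u v : ZMod N) :
    (N : ℂ) / (α * β) * ∑ l ∈ range α, ∑ k ∈ range β,
        symplecticFourier a (u + ((N / β : ℕ) : ZMod N) * k) (v - ((N / α : ℕ) : ZMod N) * l) =
      ∑ i ∈ range (N / α), ∑ j ∈ range (N / β),
        a ((α : ZMod N) * (i : ZMod N)) ((β : ZMod N) * (j : ZMod N)) *
          stdAddChar ((β : ZMod N) * (j : ZMod N) * u - (α : ZMod N) * (i : ZMod N) * v) := by
  have hexpand : ∀ (k l : ℕ) (k' l' : ZMod N),
      stdAddChar (l' * (u + ((N / β : ℕ) : ZMod N) * (k : ZMod N)) -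
            k' * (v - ((N / α : ℕ) : ZMod N) * (l : ZMod N))) =
        stdAddChar (((N / α : ℕ) : ZMod N) * k') ^ l *
          (stdAddChar (((N / β : ℕ) : ZMod N) * l') ^ k * stdAddChar (l' * u - k' * v)) := by
    intro k l k' l'
    rw [← AddChar.map_nsmul_eq_pow, ← AddChar.map_nsmul_eq_pow, ← AddChar.map_add_eq_mul,
      ← AddChar.map_add_eq_mul, nsmul_eq_mul, nsmul_eq_mul]
    ring_nf
  have hα₀ : (α : ℂ) ≠ 0 := Nat.cast_ne_zero.2 (Nat.pos_of_dvd_of_pos hα (NeZero.pos N)).ne'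
  have hβ₀ : (β : ℂ) ≠ 0 := Nat.cast_ne_zero.2 (Nat.pos_of_dvd_of_pos hβ (NeZero.pos N)).ne'
  have hN₀ : (N : ℂ) ≠ 0 := Nat.cast_ne_zero.2 (NeZero.ne N)
  calc _ = (N : ℂ) / (α * β) * (1 / N) * ∑ k' : ZMod N,
          (∑ l ∈ range α, stdAddChar (((N / α : ℕ) : ZMod N) * k') ^ l) *
          ∑ l' : ZMod N, (∑ k ∈ range β, stdAddChar (((N / β : ℕ) : ZMod N) * l') ^ k) *
            (a k' l' * stdAddChar (l' * u - k' * v)) := by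
        simp only [symplecticFourier, hexpand, mul_sum, sum_mul, ← sum_product']
        refine sum_nbij' (fun p => (p.2.2.1, (p.2.2.2, p.2.1), p.1))
          (fun q => (q.2.2, q.2.1.2, q.1, q.2.1.1)) ?_ ?_ (fun _ _ => rfl) (fun _ _ => rfl) ?_
        · simp +contextual
        · simp +contextual
        · intros; ring
    _ = (N : ℂ) / (α * β) * (1 / N) * (α * ∑ i ∈ range (N / α), β * ∑ j ∈ range (N / β),
          a ((α : ZMod N) * (i : ZMod N)) ((β : ZMod N) * (j : ZMod N)) *
          stdAddChar ((β : ZMod N) * (j : ZMod N) * u - (α : ZMod N) * (i : ZMod N) * v)) := by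
        simp only [sum_geom_sum_stdAddChar_mul hα, sum_geom_sum_stdAddChar_mul hβ]
    _ = _ := by
        rw [← mul_sum]
        field_simp

open Complex Real in
theorem exp_natCast_mul_val (m : ℕ) (u : ZMod N) :
    exp (2 * π * I * ((m : ℂ) * (u.val : ℂ)) / N) = stdAddChar ((m : ZMod N) * u) := by
  have h := stdAddChar_coe (N := N) (m * u.val : ℤ)
  simp only [Int.cast_mul, Int.cast_natCast, natCast_zmod_val] at h
  rw [h]

open Complex Real in
theorem exp_neg_val_mul_val (t v : ZMod N) :
    exp (-2 * π * I * ((t.val : ℂ) * (v.val : ℂ)) / N) = stdAddChar (-(t * v)) := by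
  have h := stdAddChar_coe (N := N) (-(t.val * v.val : ℤ))
  simp only [Int.cast_neg, Int.cast_mul, Int.cast_natCast, natCast_zmod_val] at h
  rw [h]
  congr 1
  ring

end ZMod

theorem spreading_function_gabor_multiplier_general (N α β : ℕ) [NeZero N]
    (hαdvd : α ∣ N) (hβdvd : β ∣ N)
    (a : ZMod N → ZMod N → ℂ) (g₁ g₂ : ZMod N → ℂ) (u v : ZMod N) :
    (∑ t : ZMod N,
        (∑ k ∈ Finset.range (N / α), ∑ l ∈ Finset.range (N / β),
          a ((α : ZMod N) * (k : ZMod N)) ((β : ZMod N) * (l : ZMod N)) *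
            conj (g₁ ((t - u) - (α : ZMod N) * (k : ZMod N))) *
            g₂ (t - (α : ZMod N) * (k : ZMod N)) *
            Complex.exp (2 * Real.pi * Complex.I * (((β * l : ℕ) : ℂ) * (u.val : ℂ)) / N)) *
        Complex.exp (-2 * Real.pi * Complex.I * ((t.val : ℂ) * (v.val : ℂ)) / N)) =
      ((N : ℂ) / ((α : ℂ) * (β : ℂ))) *
        (∑ l ∈ Finset.range α, ∑ k ∈ Finset.range β,
          (1 / (N : ℂ)) * ∑ k' : ZMod N, ∑ l' : ZMod N, a k' l' *
            Complex.exp (2 * Real.pi * Complex.I *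
              ((((l'.val : ℤ) * (((u + ((N / β : ℕ) : ZMod N) * (k : ZMod N)).val : ℕ) : ℤ) -
                  (k'.val : ℤ) *
                    (((v - ((N / α : ℕ) : ZMod N) * (l : ZMod N)).val : ℕ) : ℤ)) : ℤ) : ℂ) / N)) *
        (∑ t : ZMod N, g₂ t * conj (g₁ (t - u)) *
          Complex.exp (-2 * Real.pi * Complex.I * ((t.val : ℂ) * (v.val : ℂ)) / N)) := by
  simp_rw [ZMod.exp_natCast_mul_val, ZMod.exp_neg_val_mul_val, ← ZMod.stdAddChar_coe]
  simp only [Int.cast_sub, Int.cast_mul, Int.cast_natCast, Nat.cast_mul, ZMod.natCast_zmod_val]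
  rw [sum_gaborKernel_mul_addChar_eq_mul_stft,
    ← ZMod.poisson_summation_symplecticFourier hαdvd hβdvd]
  rfl

/-- The spreading function of the finite Gabor multiplier `G_a^{g₁,g₂}` with lattice
`αℤ_N × βℤ_N` satisfies
`η(G)(u,v) = (N/(αβ)) · [Σ_{l<α} Σ_{k<β} F_s a(u + Bk, v − Al)] · V_{g₁}g₂(u,v)`,
where `A = N/α`, `B = N/β`. -/
theorem spreading_function_gabor_multiplier (N α β : ℕ) [NeZero N]
    (hα : 0 < α) (hβ : 0 < β) (hαdvd : α ∣ N) (hβdvd : β ∣ N)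
    (a : ZMod N → ZMod N → ℂ) (g₁ g₂ : ZMod N → ℂ) (u v : ZMod N) :
    (∑ t : ZMod N,
        (∑ k ∈ Finset.range (N / α), ∑ l ∈ Finset.range (N / β),
          a ((α : ZMod N) * (k : ZMod N)) ((β : ZMod N) * (l : ZMod N)) *
            conj (g₁ ((t - u) - (α : ZMod N) * (k : ZMod N))) *
            g₂ (t - (α : ZMod N) * (k : ZMod N)) *
            Complex.exp (2 * Real.pi * Complex.I * (((β * l : ℕ) : ℂ) * (u.val : ℂ)) / N)) *
        Complex.exp (-2 * Real.pi * Complex.I * ((t.val : ℂ) * (v.val : ℂ)) / N)) =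
      ((N : ℂ) / ((α : ℂ) * (β : ℂ))) *
        (∑ l ∈ Finset.range α, ∑ k ∈ Finset.range β,
          (1 / (N : ℂ)) * ∑ k' : ZMod N, ∑ l' : ZMod N, a k' l' *
            Complex.exp (2 * Real.pi * Complex.I *
              ((((l'.val : ℤ) * (((u + ((N / β : ℕ) : ZMod N) * (k : ZMod N)).val : ℕ) : ℤ) -
                  (k'.val : ℤ) *
                    (((v - ((N / α : ℕ) : ZMod N) * (l : ZMod N)).val : ℕ) : ℤ)) : ℤ) : ℂ) / N)) *
        (∑ t : ZMod N, g₂ t * conj (g₁ (t - u)) *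
          Complex.exp (-2 * Real.pi * Complex.I * ((t.val : ℂ) * (v.val : ℂ)) / N)) :=
  spreading_function_gabor_multiplier_general N α β hαdvd hβdvd a g₁ g₂ u v
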